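/- arXiv:2408.13982 — 2 statements merged into one kernel-verified Lean document; each statement's English description precedes it below -/
import Mathlib

section
/- Let Ω ⊆ ℝ² be open, let q : Ω → ℝ be smooth with q_xy ≠ 0 on Ω, and suppose Sˣ, Sʸ : Ω → ℝ are smooth functions satisfying on Ω: (E1) ∂_y Sˣ + ∂_x Sʸ = 4 q_x q_y; (E2) ∂_x Sˣ = 2 q_x²; (E3) ∂_y Sʸ = 2 q_y², together with the identity x Sˣ + y Sʸ = 2 q². Then q satisfies Euler's relation x q_x + y q_y = q on Ω (i.e. q is homogeneous of degree 1). -/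
open Real Set

/-- Partial derivative in the first variable. -/
noncomputable def px (f : ℝ × ℝ → ℝ) : ℝ × ℝ → ℝ :=
  fun p => deriv (fun t => f (t, p.2)) p.1

/-- Partial derivative in the second variable. -/
noncomputable def py (f : ℝ × ℝ → ℝ) : ℝ × ℝ → ℝ :=
  fun p => deriv (fun t => f (p.1, t)) p.2

/-!
Apply the Euler operator `E = x ∂ₓ + y ∂_y`, i.e. the derivative along the ray `t ↦ t • p` at
`t = 1`, to `x Sˣ + y Sʸ = 2 q²`. The left side gives `x Sˣ + y Sʸ + x E Sˣ + y E Sʸ`, and by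
(E1)–(E3) `x E Sˣ + y E Sʸ = 2 (E q)²`; the right side gives `4 q E q`. Hence
`2 q² + 2 (E q)² = 4 q E q`, that is `(q - E q)² = 0`.
-/

open Filter Topology

noncomputable def eulerOp (f : ℝ × ℝ → ℝ) (p : ℝ × ℝ) : ℝ :=
  p.1 * px f p + p.2 * py f p

section Partials

variable {f : ℝ × ℝ → ℝ} {p : ℝ × ℝ}

theorem hasDerivAt_px (hf : DifferentiableAt ℝ f p) :
    HasDerivAt (fun t => f (t, p.2)) (px f p) p.1 :=
  (hf.comp p.1 (differentiableAt_id.prodMk (differentiableAt_const p.2))).hasDerivAt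

theorem hasDerivAt_py (hf : DifferentiableAt ℝ f p) :
    HasDerivAt (fun t => f (p.1, t)) (py f p) p.2 :=
  (hf.comp p.2 ((differentiableAt_const p.1).prodMk differentiableAt_id)).hasDerivAt

theorem fderiv_apply_eq_px_py (hf : DifferentiableAt ℝ f p) (v : ℝ × ℝ) :
    fderiv ℝ f p v = v.1 * px f p + v.2 * py f p := by
  have hx : px f p = fderiv ℝ f p (1, 0) := by
    refine (hasDerivAt_px hf).unique ?_
    simpa [Function.comp_def] using
      hf.hasFDerivAt.comp_hasDerivAt p.1 ((hasDerivAt_id p.1).prodMk (hasDerivAt_const p.1 p.2))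
  have hy : py f p = fderiv ℝ f p (0, 1) := by
    refine (hasDerivAt_py hf).unique ?_
    simpa [Function.comp_def] using
      hf.hasFDerivAt.comp_hasDerivAt p.2 ((hasDerivAt_const p.2 p.1).prodMk (hasDerivAt_id p.2))
  have hv : v = v.1 • ((1 : ℝ), (0 : ℝ)) + v.2 • ((0 : ℝ), (1 : ℝ)) := by ext <;> simp
  rw [hx, hy, hv, map_add, map_smul, map_smul, smul_eq_mul, smul_eq_mul]
  simp

theorem hasDerivAt_eulerOp (hf : DifferentiableAt ℝ f p) :
    HasDerivAt (fun t : ℝ => f (t • p)) (eulerOp f p) 1 := by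
  have hray : HasDerivAt (fun t : ℝ => t • p) p 1 := by
    simpa using (hasDerivAt_id (1 : ℝ)).smul_const p
  rw [eulerOp, ← fderiv_apply_eq_px_py hf]
  exact hf.hasFDerivAt.comp_hasDerivAt_of_eq 1 hray (one_smul ℝ p).symm

end Partials

section Resolvents

variable {q Sx Sy : ℝ × ℝ → ℝ} {p : ℝ × ℝ}

theorem eulerOp_resolvent_identity (hq : DifferentiableAt ℝ q p)
    (hSx : DifferentiableAt ℝ Sx p) (hSy : DifferentiableAt ℝ Sy p)
    (hrel : ∀ᶠ z in 𝓝 p, z.1 * Sx z + z.2 * Sy z = 2 * q z ^ 2) :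
    p.1 * Sx p + p.2 * Sy p + p.1 * eulerOp Sx p + p.2 * eulerOp Sy p =
      4 * q p * eulerOp q p := by
  have hlhs : HasDerivAt (fun t : ℝ => t * (p.1 * Sx (t • p) + p.2 * Sy (t • p)))
      (p.1 * Sx p + p.2 * Sy p + p.1 * eulerOp Sx p + p.2 * eulerOp Sy p) 1 :=
    ((hasDerivAt_id' 1).mul (((hasDerivAt_eulerOp hSx).const_mul p.1).add
      ((hasDerivAt_eulerOp hSy).const_mul p.2))).congr_deriv
      (by simp only [Pi.add_apply, one_smul, one_mul]; ring)
  have hrhs : HasDerivAt (fun t : ℝ => 2 * q (t • p) ^ 2) (4 * q p * eulerOp q p) 1 :=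
    (((hasDerivAt_eulerOp hq).pow 2).const_mul 2).congr_deriv
      (by simp only [Nat.cast_ofNat, one_smul, Nat.add_one_sub_one, pow_one]; ring)
  have hray : Tendsto (fun t : ℝ => t • p) (𝓝 1) (𝓝 p) :=
    (continuous_id.smul continuous_const).tendsto' 1 p (one_smul ℝ p)
  refine hlhs.unique (hrhs.congr_of_eventuallyEq ?_)
  filter_upwards [hray.eventually hrel] with t ht
  simp only [Prod.smul_fst, Prod.smul_snd, smul_eq_mul] at ht
  linear_combination ht

theorem eulerOp_resolvents_eq_two_mul_sq (hE1 : py Sx p + px Sy p = 4 * px q p * py q p)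
    (hE2 : px Sx p = 2 * px q p ^ 2) (hE3 : py Sy p = 2 * py q p ^ 2) :
    p.1 * eulerOp Sx p + p.2 * eulerOp Sy p = 2 * eulerOp q p ^ 2 := by
  unfold eulerOp
  linear_combination p.1 ^ 2 * hE2 + p.1 * p.2 * hE1 + p.2 ^ 2 * hE3

end Resolvents

theorem euler_relation_of_resolvent_identity_general
    (Ω : Set (ℝ × ℝ)) (hΩ : IsOpen Ω)
    (q Sx Sy : ℝ × ℝ → ℝ)
    (hq : ContDiffOn ℝ (⊤ : ℕ∞) q Ω)
    (hSx : ContDiffOn ℝ (⊤ : ℕ∞) Sx Ω)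
    (hSy : ContDiffOn ℝ (⊤ : ℕ∞) Sy Ω)
    (hE1 : ∀ p ∈ Ω, py Sx p + px Sy p = 4 * px q p * py q p)
    (hE2 : ∀ p ∈ Ω, px Sx p = 2 * (px q p) ^ 2)
    (hE3 : ∀ p ∈ Ω, py Sy p = 2 * (py q p) ^ 2)
    (hrel : ∀ p ∈ Ω, p.1 * Sx p + p.2 * Sy p = 2 * (q p) ^ 2) :
    ∀ p ∈ Ω, p.1 * px q p + p.2 * py q p = q p := by
  intro p hp
  have hΩp : Ω ∈ 𝓝 p := hΩ.mem_nhds hp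
  have hdiff {f : ℝ × ℝ → ℝ} (hf : ContDiffOn ℝ (⊤ : ℕ∞) f Ω) : DifferentiableAt ℝ f p :=
    (hf.contDiffAt hΩp).differentiableAt (by simp)
  have hradial := eulerOp_resolvent_identity (hdiff hq) (hdiff hSx) (hdiff hSy)
    (eventually_of_mem hΩp hrel)
  have hres := eulerOp_resolvents_eq_two_mul_sq (hE1 p hp) (hE2 p hp) (hE3 p hp)
  have hsq : (q p - eulerOp q p) ^ 2 = 0 := by
    linear_combination (1 / 2 : ℝ) * hradial - (1 / 2 : ℝ) * hres - (1 / 2 : ℝ) * hrel p hp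
  exact (sub_eq_zero.mp (pow_eq_zero_iff two_ne_zero |>.mp hsq)).symm

/-- if resolvents satisfying (E1)–(E3) also satisfy `x Sˣ + y Sʸ = 2q²`
and `q_xy ≠ 0`, then `q` satisfies Euler's relation `x q_x + y q_y = q`. -/
theorem euler_relation_of_resolvent_identity
    (Ω : Set (ℝ × ℝ)) (hΩ : IsOpen Ω)
    (q Sx Sy : ℝ × ℝ → ℝ)
    (hq : ContDiffOn ℝ (⊤ : ℕ∞) q Ω)
    (hqxy : ∀ p ∈ Ω, py (px q) p ≠ 0)
    (hSx : ContDiffOn ℝ (⊤ : ℕ∞) Sx Ω)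
    (hSy : ContDiffOn ℝ (⊤ : ℕ∞) Sy Ω)
    (hE1 : ∀ p ∈ Ω, py Sx p + px Sy p = 4 * px q p * py q p)
    (hE2 : ∀ p ∈ Ω, px Sx p = 2 * (px q p) ^ 2)
    (hE3 : ∀ p ∈ Ω, py Sy p = 2 * (py q p) ^ 2)
    (hrel : ∀ p ∈ Ω, p.1 * Sx p + p.2 * Sy p = 2 * (q p) ^ 2) :
    ∀ p ∈ Ω, p.1 * px q p + p.2 * py q p = q p :=
  euler_relation_of_resolvent_identity_general Ω hΩ q Sx Sy hq hSx hSy hE1 hE2 hE3 hrel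
end

section
/- Let Ω ⊆ ℝ² be open with q : Ω → ℝ smooth, nowhere vanishing, C² and satisfying x q_x + y q_y = q on Ω, let Sˣ, Sʸ : Ω → ℝ be smooth with x Sˣ + y Sʸ = 2 q² on Ω, let A, B be smooth functions of one real variable, and let λ ∈ ℝ. Suppose the equations (E4) A''(x) − (Sˣ/q²) A'(x) = B''(y) − (Sʸ/q²) B'(y) (common value denoted w) and (E5) −λ/q² = (1/2) w − (q_x A'(x) + q_xx A(x) + q_y B'(y) + q_yy B(y))/q + (q_x² A(x) + q_y² B(y))/q² + (Sˣ q_x A(x) + Sʸ q_y B(y))/q³ hold on Ω. Then for every c ∈ ℝ, the pair Ã(x) := A(x) + c x², B̃(y) := B(y) − c y² also satisfies (E4) and (E5) on Ω, with the same Sˣ, Sʸ, q, λ. -/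
open Real Set

open Filter Topology

/-!
Under `A ↦ A + c x²`, `B ↦ B - c y²` the two sides of (E4) change by `2c - 2c x Sˣ / q²` and
`-2c + 2c y Sʸ / q²`, which agree because `x Sˣ + y Sʸ = 2 q²`.

In (E5) the second-derivative terms change by `-c (x² q_xx - y² q_yy) / q`. Differentiating
Euler's relation `x q_x + y q_y = q` gives `x q_xx + y q_xy = 0 = x q_xy + y q_yy`, so by the
symmetry of `q_xy` this change vanishes. What remains is `c` times a rational function of
`x q_x`, `y q_y`, `x Sˣ`, `y Sʸ` and `q`, which vanishes by the two linear relations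
`x q_x + y q_y = q` and `x Sˣ + y Sʸ = 2 q²`.
-/

section PartialDerivatives

variable {f g : ℝ × ℝ → ℝ} {p : ℝ × ℝ}

lemma eventually_differentiableAt_of_contDiffAt (hf : ContDiffAt ℝ 2 f p) :
    ∀ᶠ s in 𝓝 p, DifferentiableAt ℝ f s :=
  (hf.eventually (by simp)).mono fun _ hs => hs.differentiableAt (by norm_num)

lemma differentiableAt_fderiv_of_contDiffAt (hf : ContDiffAt ℝ 2 f p) :
    DifferentiableAt ℝ (fderiv ℝ f) p :=
  (hf.fderiv_right (m := 1) (by norm_num)).differentiableAt (by norm_num)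

lemma px_eq_fderiv (hf : DifferentiableAt ℝ f p) : px f p = fderiv ℝ f p (1, 0) := by
  have hline : HasDerivAt (fun t : ℝ => ((t, p.2) : ℝ × ℝ)) (1, 0) p.1 :=
    (hasDerivAt_id p.1).prodMk (hasDerivAt_const p.1 p.2)
  exact (hf.hasFDerivAt.comp_hasDerivAt p.1 hline).deriv

lemma py_eq_fderiv (hf : DifferentiableAt ℝ f p) : py f p = fderiv ℝ f p (0, 1) := by
  have hline : HasDerivAt (fun t : ℝ => ((p.1, t) : ℝ × ℝ)) (0, 1) p.2 :=
    (hasDerivAt_const p.2 p.1).prodMk (hasDerivAt_id p.2)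
  exact (hf.hasFDerivAt.comp_hasDerivAt p.2 hline).deriv

lemma px_congr_of_eventuallyEq (h : f =ᶠ[𝓝 p] g) : px f p = px g p := by
  have hline : Tendsto (fun t : ℝ => ((t, p.2) : ℝ × ℝ)) (𝓝 p.1) (𝓝 p) :=
    (Continuous.prodMk_left p.2).tendsto' _ _ rfl
  exact EventuallyEq.deriv_eq (hline.eventually h :
    (fun t => f (t, p.2)) =ᶠ[𝓝 p.1] fun t => g (t, p.2))

lemma py_congr_of_eventuallyEq (h : f =ᶠ[𝓝 p] g) : py f p = py g p := by
  have hline : Tendsto (fun t : ℝ => ((p.1, t) : ℝ × ℝ)) (𝓝 p.2) (𝓝 p) :=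
    (Continuous.prodMk_right p.1).tendsto' _ _ rfl
  exact EventuallyEq.deriv_eq (hline.eventually h :
    (fun t => f (p.1, t)) =ᶠ[𝓝 p.2] fun t => g (p.1, t))

lemma px_px_eq_fderiv_fderiv (hf : ContDiffAt ℝ 2 f p) :
    px (px f) p = fderiv ℝ (fderiv ℝ f) p (1, 0) (1, 0) := by
  have hdiff := eventually_differentiableAt_of_contDiffAt hf
  have hf' := differentiableAt_fderiv_of_contDiffAt hf
  rw [px_congr_of_eventuallyEq (hdiff.mono fun s hs => px_eq_fderiv hs),
    px_eq_fderiv (hf'.clm_apply (differentiableAt_const _)),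
    fderiv_clm_apply hf' (differentiableAt_const _)]
  simp

lemma py_py_eq_fderiv_fderiv (hf : ContDiffAt ℝ 2 f p) :
    py (py f) p = fderiv ℝ (fderiv ℝ f) p (0, 1) (0, 1) := by
  have hdiff := eventually_differentiableAt_of_contDiffAt hf
  have hf' := differentiableAt_fderiv_of_contDiffAt hf
  rw [py_congr_of_eventuallyEq (hdiff.mono fun s hs => py_eq_fderiv hs),
    py_eq_fderiv (hf'.clm_apply (differentiableAt_const _)),
    fderiv_clm_apply hf' (differentiableAt_const _)]
  simp

lemma ContinuousLinearMap.apply_eq_fst_smul_add_snd_smul {E : Type*}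
    [NormedAddCommGroup E] [NormedSpace ℝ E] (L : ℝ × ℝ →L[ℝ] E) (v : ℝ × ℝ) :
    L v = v.1 • L (1, 0) + v.2 • L (0, 1) := by
  conv_lhs => rw [show v = v.1 • ((1 : ℝ), (0 : ℝ)) + v.2 • ((0 : ℝ), (1 : ℝ)) by ext <;> simp]
  rw [map_add, map_smul, map_smul]

lemma fderiv_apply_self_of_euler (hf : DifferentiableAt ℝ f p)
    (heuler : p.1 * px f p + p.2 * py f p = f p) : fderiv ℝ f p p = f p := by
  rw [ContinuousLinearMap.apply_eq_fst_smul_add_snd_smul, ← px_eq_fderiv hf, ← py_eq_fderiv hf]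
  exact heuler

lemma fderiv_fderiv_apply_self_eq_zero (hf : ContDiffAt ℝ 2 f p)
    (heuler : ∀ᶠ s in 𝓝 p, fderiv ℝ f s s = f s) (v : ℝ × ℝ) :
    fderiv ℝ (fderiv ℝ f) p v p = 0 := by
  have hf' := differentiableAt_fderiv_of_contDiffAt hf
  have hderiv := (hf'.hasFDerivAt.clm_apply (hasFDerivAt_id p)).sub
    (hf.differentiableAt (by norm_num)).hasFDerivAt
  have hzero : HasFDerivAt (fun s => fderiv ℝ f s s - f s) (0 : ℝ × ℝ →L[ℝ] ℝ) p :=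
    (hasFDerivAt_const 0 p).congr_of_eventuallyEq (heuler.mono fun s hs => sub_eq_zero.mpr hs)
  simpa using congrArg (· v) (hderiv.unique hzero)

theorem sq_mul_px_px_eq_sq_mul_py_py (hf : ContDiffAt ℝ 2 f p)
    (heuler : ∀ᶠ s in 𝓝 p, s.1 * px f s + s.2 * py f s = f s) :
    p.1 ^ 2 * px (px f) p = p.2 ^ 2 * py (py f) p := by
  have hdiff := eventually_differentiableAt_of_contDiffAt hf
  have hzero := fderiv_fderiv_apply_self_eq_zero hf
    ((hdiff.and heuler).mono fun s hs => fderiv_apply_self_of_euler hs.1 hs.2)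
  have hsymm := hf.isSymmSndFDerivAt (by simp) (1, 0) (0, 1)
  have hx := hzero (1, 0)
  have hy := hzero (0, 1)
  rw [ContinuousLinearMap.apply_eq_fst_smul_add_snd_smul, smul_eq_mul, smul_eq_mul] at hx hy
  rw [px_px_eq_fderiv_fderiv hf, py_py_eq_fderiv_fderiv hf]
  linear_combination p.1 * hx - p.2 * hy - p.1 * p.2 * hsymm

end PartialDerivatives

lemma deriv_add_const_mul_sq {f : ℝ → ℝ} {x : ℝ} (hf : DifferentiableAt ℝ f x) (c : ℝ) :
    deriv (fun x => f x + c * x ^ 2) x = deriv f x + c * (2 * x) := by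
  have := hf.hasDerivAt.fun_add ((hasDerivAt_pow 2 x).const_mul c)
  rw [this.deriv]
  norm_num

lemma deriv_deriv_add_const_mul_sq {f : ℝ → ℝ} {x : ℝ} (hf : Differentiable ℝ f)
    (hf' : DifferentiableAt ℝ (deriv f) x) (c : ℝ) :
    deriv (deriv (fun x => f x + c * x ^ 2)) x = deriv (deriv f) x + 2 * c := by
  have hderiv : deriv (fun x => f x + c * x ^ 2) = fun x => deriv f x + c * (2 * x) :=
    funext fun x => deriv_add_const_mul_sq (hf x) c
  have := hf'.hasDerivAt.fun_add (((hasDerivAt_id' x).const_mul 2).const_mul c)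
  rw [hderiv, this.deriv]
  ring

lemma e4_of_quadratic_shift {x y q sx sy a' a'' b' b'' c : ℝ} (hq : q ≠ 0)
    (hS : x * sx + y * sy = 2 * q ^ 2) (h : a'' - sx / q ^ 2 * a' = b'' - sy / q ^ 2 * b') :
    a'' + 2 * c - sx / q ^ 2 * (a' + c * (2 * x)) =
      b'' + 2 * -c - sy / q ^ 2 * (b' + -c * (2 * y)) := by
  field_simp at h ⊢
  linear_combination h - 2 * c * hS

lemma e5_of_quadratic_shift {x y q qx qy qxx qyy sx sy a a' a'' b b' c lam : ℝ} (hq : q ≠ 0)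
    (heuler : x * qx + y * qy = q) (hS : x * sx + y * sy = 2 * q ^ 2)
    (hqxx : x ^ 2 * qxx = y ^ 2 * qyy)
    (h : -(lam / q ^ 2) = (1 / 2) * (a'' - sx / q ^ 2 * a')
      - (qx * a' + qxx * a + qy * b' + qyy * b) / q + (qx ^ 2 * a + qy ^ 2 * b) / q ^ 2
      + (sx * qx * a + sy * qy * b) / q ^ 3) :
    -(lam / q ^ 2) = (1 / 2) * (a'' + 2 * c - sx / q ^ 2 * (a' + c * (2 * x)))
      - (qx * (a' + c * (2 * x)) + qxx * (a + c * x ^ 2) + qy * (b' + -c * (2 * y))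
          + qyy * (b - c * y ^ 2)) / q
      + (qx ^ 2 * (a + c * x ^ 2) + qy ^ 2 * (b - c * y ^ 2)) / q ^ 2
      + (sx * qx * (a + c * x ^ 2) + sy * qy * (b - c * y ^ 2)) / q ^ 3 := by
  rw [h]
  field_simp
  linear_combination 2 * c * (q ^ 2 * hqxx - (x * sx + q * x * qx - q * y * qy - q ^ 2) * heuler
    + y * qy * hS)

theorem transform_A_B_by_c_general
    (Ω : Set (ℝ × ℝ)) (hΩ : IsOpen Ω)
    (q Sx Sy : ℝ × ℝ → ℝ) (A B : ℝ → ℝ) (lam : ℝ)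
    (hq : ContDiffOn ℝ (⊤ : ℕ∞) q Ω)
    (hq0 : ∀ p ∈ Ω, q p ≠ 0)
    (heuler : ∀ p ∈ Ω, p.1 * px q p + p.2 * py q p = q p)
    (hrel : ∀ p ∈ Ω, p.1 * Sx p + p.2 * Sy p = 2 * (q p) ^ 2)
    (hA : ContDiff ℝ (⊤ : ℕ∞) A) (hB : ContDiff ℝ (⊤ : ℕ∞) B)
    (hE4 : ∀ p ∈ Ω,
      deriv (deriv A) p.1 - Sx p / (q p) ^ 2 * deriv A p.1 =
        deriv (deriv B) p.2 - Sy p / (q p) ^ 2 * deriv B p.2)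
    (hE5 : ∀ p ∈ Ω,
      -(lam / (q p) ^ 2) =
        (1 / 2) * (deriv (deriv A) p.1 - Sx p / (q p) ^ 2 * deriv A p.1)
        - (px q p * deriv A p.1 + px (px q) p * A p.1
            + py q p * deriv B p.2 + py (py q) p * B p.2) / q p
        + ((px q p) ^ 2 * A p.1 + (py q p) ^ 2 * B p.2) / (q p) ^ 2
        + (Sx p * px q p * A p.1 + Sy p * py q p * B p.2) / (q p) ^ 3) :
    ∀ c : ℝ,
      (∀ p ∈ Ω,
        deriv (deriv (fun x => A x + c * x ^ 2)) p.1
            - Sx p / (q p) ^ 2 * deriv (fun x => A x + c * x ^ 2) p.1 =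
          deriv (deriv (fun y => B y - c * y ^ 2)) p.2
            - Sy p / (q p) ^ 2 * deriv (fun y => B y - c * y ^ 2) p.2) ∧
      (∀ p ∈ Ω,
        -(lam / (q p) ^ 2) =
          (1 / 2) * (deriv (deriv (fun x => A x + c * x ^ 2)) p.1
              - Sx p / (q p) ^ 2 * deriv (fun x => A x + c * x ^ 2) p.1)
          - (px q p * deriv (fun x => A x + c * x ^ 2) p.1
              + px (px q) p * (A p.1 + c * p.1 ^ 2)
              + py q p * deriv (fun y => B y - c * y ^ 2) p.2
              + py (py q) p * (B p.2 - c * p.2 ^ 2)) / q p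
          + ((px q p) ^ 2 * (A p.1 + c * p.1 ^ 2)
              + (py q p) ^ 2 * (B p.2 - c * p.2 ^ 2)) / (q p) ^ 2
          + (Sx p * px q p * (A p.1 + c * p.1 ^ 2)
              + Sy p * py q p * (B p.2 - c * p.2 ^ 2)) / (q p) ^ 3) := by
  intro c
  have hBshift : (fun y => B y - c * y ^ 2) = fun y => B y + -c * y ^ 2 := by
    funext y
    ring
  obtain ⟨hA₁, hA₂⟩ := contDiff_infty_iff_deriv.mp hA
  obtain ⟨hB₁, hB₂⟩ := contDiff_infty_iff_deriv.mp hB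
  have hA'' := hA₂.differentiable (by simp)
  have hB'' := hB₂.differentiable (by simp)
  refine ⟨fun p hp => ?_, fun p hp => ?_⟩ <;>
    rw [hBshift, deriv_add_const_mul_sq (hA₁ _), deriv_add_const_mul_sq (hB₁ _),
      deriv_deriv_add_const_mul_sq hA₁ (hA'' _)]
  · rw [deriv_deriv_add_const_mul_sq hB₁ (hB'' _)]
    exact e4_of_quadratic_shift (hq0 p hp) (hrel p hp) (hE4 p hp)
  · have hqp : ContDiffAt ℝ 2 q p := (hq.contDiffAt (hΩ.mem_nhds hp)).of_le (by norm_cast)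
    have hqxx := sq_mul_px_px_eq_sq_mul_py_py hqp (eventually_of_mem (hΩ.mem_nhds hp) heuler)
    exact e5_of_quadratic_shift (hq0 p hp) (heuler p hp) (hrel p hp) hqxx (hE5 p hp)

/-- for homogeneous `q` with `x Sˣ + y Sʸ = 2q²`, if `(A, B)` satisfies
(E4) and (E5), then so does `(A + c x², B − c y²)` for any `c ∈ ℝ`, with the same
`Sˣ, Sʸ, q, λ`. -/
theorem transform_A_B_by_c
    (Ω : Set (ℝ × ℝ)) (hΩ : IsOpen Ω)
    (q Sx Sy : ℝ × ℝ → ℝ) (A B : ℝ → ℝ) (lam : ℝ)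
    (hq : ContDiffOn ℝ (⊤ : ℕ∞) q Ω)
    (hq0 : ∀ p ∈ Ω, q p ≠ 0)
    (heuler : ∀ p ∈ Ω, p.1 * px q p + p.2 * py q p = q p)
    (hSx : ContDiffOn ℝ (⊤ : ℕ∞) Sx Ω)
    (hSy : ContDiffOn ℝ (⊤ : ℕ∞) Sy Ω)
    (hrel : ∀ p ∈ Ω, p.1 * Sx p + p.2 * Sy p = 2 * (q p) ^ 2)
    (hA : ContDiff ℝ (⊤ : ℕ∞) A) (hB : ContDiff ℝ (⊤ : ℕ∞) B)
    (hE4 : ∀ p ∈ Ω,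
      deriv (deriv A) p.1 - Sx p / (q p) ^ 2 * deriv A p.1 =
        deriv (deriv B) p.2 - Sy p / (q p) ^ 2 * deriv B p.2)
    (hE5 : ∀ p ∈ Ω,
      -(lam / (q p) ^ 2) =
        (1 / 2) * (deriv (deriv A) p.1 - Sx p / (q p) ^ 2 * deriv A p.1)
        - (px q p * deriv A p.1 + px (px q) p * A p.1
            + py q p * deriv B p.2 + py (py q) p * B p.2) / q p
        + ((px q p) ^ 2 * A p.1 + (py q p) ^ 2 * B p.2) / (q p) ^ 2
        + (Sx p * px q p * A p.1 + Sy p * py q p * B p.2) / (q p) ^ 3) :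
    ∀ c : ℝ,
      (∀ p ∈ Ω,
        deriv (deriv (fun x => A x + c * x ^ 2)) p.1
            - Sx p / (q p) ^ 2 * deriv (fun x => A x + c * x ^ 2) p.1 =
          deriv (deriv (fun y => B y - c * y ^ 2)) p.2
            - Sy p / (q p) ^ 2 * deriv (fun y => B y - c * y ^ 2) p.2) ∧
      (∀ p ∈ Ω,
        -(lam / (q p) ^ 2) =
          (1 / 2) * (deriv (deriv (fun x => A x + c * x ^ 2)) p.1
              - Sx p / (q p) ^ 2 * deriv (fun x => A x + c * x ^ 2) p.1)
          - (px q p * deriv (fun x => A x + c * x ^ 2) p.1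
              + px (px q) p * (A p.1 + c * p.1 ^ 2)
              + py q p * deriv (fun y => B y - c * y ^ 2) p.2
              + py (py q) p * (B p.2 - c * p.2 ^ 2)) / q p
          + ((px q p) ^ 2 * (A p.1 + c * p.1 ^ 2)
              + (py q p) ^ 2 * (B p.2 - c * p.2 ^ 2)) / (q p) ^ 2
          + (Sx p * px q p * (A p.1 + c * p.1 ^ 2)
              + Sy p * py q p * (B p.2 - c * p.2 ^ 2)) / (q p) ^ 3) :=
  transform_A_B_by_c_general Ω hΩ q Sx Sy A B lam hq hq0 heuler hrel hA hB hE4 hE5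
end
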